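/- Let d ≥ 2 be an integer and let s be a real number with 0 < s < d−1. Then ∫₀^π sin^d(φ) · (1−cos(φ))^{−(s+2)/2} dφ = 2^{d−1−s/2} · Γ((d−s−1)/2) Γ((d+1)/2) / Γ(d − s/2). -/

import Mathlib

open MeasureTheory Metric Real
open scoped ENNReal RealInnerProductSpace Classical

noncomputable section

/-- The real-valued anisotropic Riesz kernel `|x|^{-s} Φ(x/|x|)` (value at `0` irrelevant). -/
def rieszKer (d : ℕ) (s : ℝ) (Φ : EuclideanSpace ℝ (Fin d) → ℝ)
    (x : EuclideanSpace ℝ (Fin d)) : ℝ :=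
  ‖x‖ ^ (-s) * Φ (‖x‖⁻¹ • x)

/-- The anisotropic Riesz kernel `W_s`, with value `+∞` at the origin. -/
def rieszW (d : ℕ) (s : ℝ) (Φ : EuclideanSpace ℝ (Fin d) → ℝ)
    (x : EuclideanSpace ℝ (Fin d)) : ℝ≥0∞ :=
  if x = 0 then ∞ else ENNReal.ofReal (rieszKer d s Φ x)

/-- The interaction energy `I_s(μ) = ∫∫ W_s(x-y) dμ(x) dμ(y)`. -/
def rieszEnergy (d : ℕ) (s : ℝ) (Φ : EuclideanSpace ℝ (Fin d) → ℝ)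
    (μ : Measure (EuclideanSpace ℝ (Fin d))) : ℝ≥0∞ :=
  ∫⁻ x, ∫⁻ y, rieszW d s Φ (x - y) ∂μ ∂μ

/-- The potential `(W_s ∗ μ)(x) = ∫ W_s(x-y) dμ(y)`. -/
def rieszPotential (d : ℕ) (s : ℝ) (Φ : EuclideanSpace ℝ (Fin d) → ℝ)
    (μ : Measure (EuclideanSpace ℝ (Fin d))) (x : EuclideanSpace ℝ (Fin d)) : ℝ≥0∞ :=
  ∫⁻ y, rieszW d s Φ (x - y) ∂μ

/-- The support of a measure: points all of whose neighbourhoods have positive measure. -/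
def msupport {α : Type*} [TopologicalSpace α] [MeasurableSpace α] (μ : Measure α) : Set α :=
  {x | ∀ U ∈ nhds x, μ U ≠ 0}

/-- The distributional Fourier transform of `W_s` is represented by `Ψ` on the unit sphere:
for every Schwartz function `φ`, `∫ W_s(x) φ̂(x) dx = ∫ |ξ|^{s-d} Ψ(ξ/|ξ|) φ(ξ) dξ`,
with `φ̂(x) = ∫ φ(ξ) e^{-i x·ξ} dξ`. -/
def FourierRep (d : ℕ) (s : ℝ) (Φ Ψ : EuclideanSpace ℝ (Fin d) → ℝ) : Prop :=
  ∀ φ : SchwartzMap (EuclideanSpace ℝ (Fin d)) ℂ,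
    (∫ x, (rieszKer d s Φ x : ℂ) *
        (∫ ξ, φ ξ * Complex.exp (-(Complex.I * (⟪x, ξ⟫ : ℂ))))) =
    ∫ ξ, ((‖ξ‖ ^ (s - d) * Ψ (‖ξ‖⁻¹ • ξ) : ℝ) : ℂ) * φ ξ

/-- Action of a `d × d` matrix on `EuclideanSpace ℝ (Fin d)`. -/
def mvec (d : ℕ) (M : Matrix (Fin d) (Fin d) ℝ) (x : EuclideanSpace ℝ (Fin d)) :
    EuclideanSpace ℝ (Fin d) :=
  (EuclideanSpace.equiv (Fin d) ℝ).symm (M.mulVec (EuclideanSpace.equiv (Fin d) ℝ x))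

/-- The measure `μ_q`: for `q > d-2` the normalized density `c_{q,d}(1-|x|²)^{(q-d)/2}` on the
closed unit ball; for `q = d-2` the normalized `(d-1)`-Hausdorff measure on the unit sphere. -/
def muq (d : ℕ) (q : ℝ) : Measure (EuclideanSpace ℝ (Fin d)) :=
  if q = (d : ℝ) - 2 then
    (ENNReal.ofReal (π ^ (-(d : ℝ)/2) * Real.Gamma ((d : ℝ)/2) / 2)) •
      (μH[(d : ℝ) - 1] : Measure (EuclideanSpace ℝ (Fin d))).restrict (Metric.sphere 0 1)
  else
    ((volume : Measure (EuclideanSpace ℝ (Fin d))).restrict (Metric.closedBall 0 1)).withDensity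
      (fun x => ENNReal.ofReal (π ^ (-(d : ℝ)/2) * Real.Gamma (1 + q/2) /
        Real.Gamma (1 + (q - d)/2) * (1 - ‖x‖^2) ^ ((q - (d : ℝ))/2)))


open Set

lemma realBeta {a b : ℝ} (ha : 0 < a) (hb : 0 < b) :
    ∫ x in (0:ℝ)..1, x ^ (a - 1) * (1 - x) ^ (b - 1) =
      Real.Gamma a * Real.Gamma b / Real.Gamma (a + b) := by
  have h := Complex.Gamma_mul_Gamma_eq_betaIntegral (s := (a : ℂ)) (t := (b : ℂ))
    (by simpa using ha) (by simpa using hb)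
  have hβ : Complex.betaIntegral a b =
      ((∫ x in (0:ℝ)..1, x ^ (a - 1) * (1 - x) ^ (b - 1) : ℝ) : ℂ) := by
    rw [Complex.betaIntegral, ← intervalIntegral.integral_ofReal]
    refine intervalIntegral.integral_congr fun x hx => ?_
    rw [Set.uIcc_of_le (by norm_num : (0:ℝ) ≤ 1)] at hx
    have h1 : (0:ℝ) ≤ x := hx.1
    have h2 : (0:ℝ) ≤ 1 - x := by linarith [hx.2]
    have e1 : ((a:ℂ) - 1) = ((a - 1 : ℝ) : ℂ) := by push_cast; ring
    have e2 : ((b:ℂ) - 1) = ((b - 1 : ℝ) : ℂ) := by push_cast; ring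
    rw [e1, e2, ← Complex.ofReal_cpow h1, ← Complex.ofReal_one, ← Complex.ofReal_sub,
      ← Complex.ofReal_cpow h2]
    push_cast
    ring
  rw [hβ, ← Complex.ofReal_add, Complex.Gamma_ofReal, Complex.Gamma_ofReal,
    Complex.Gamma_ofReal] at h
  have h' : Real.Gamma a * Real.Gamma b =
      Real.Gamma (a + b) * ∫ x in (0:ℝ)..1, x ^ (a - 1) * (1 - x) ^ (b - 1) := by
    exact_mod_cast h
  have hne : Real.Gamma (a + b) ≠ 0 := (Real.Gamma_pos_of_pos (by linarith)).ne'
  field_simp [hne] at h' ⊢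
  linarith [h']

theorem stmt_15 (d : ℕ) (hd : 2 ≤ d) (s : ℝ) (hs0 : 0 < s) (hs : s < (d : ℝ) - 1) :
    ∫ φ in (0 : ℝ)..π, Real.sin φ ^ d * (1 - Real.cos φ) ^ (-(s + 2)/2) =
      (2 : ℝ) ^ ((d : ℝ) - 1 - s/2) *
        (Real.Gamma (((d : ℝ) - s - 1)/2) * Real.Gamma (((d : ℝ) + 1)/2) /
          Real.Gamma ((d : ℝ) - s/2)) := by
  have hd2 : (2:ℝ) ≤ (d:ℝ) := by exact_mod_cast hd
  set e : ℝ := ((d:ℝ) - 1)/2 with he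
  set r : ℝ := -(s + 2)/2 with hr
  set g : ℝ → ℝ := fun u => (1 - u^2) ^ e * (1 - u) ^ r with hg
  -- image facts
  have himg1 : Real.cos '' Ioo 0 π = Ioo (-1 : ℝ) 1 := by
    ext y
    constructor
    · rintro ⟨φ, hφ, rfl⟩
      have h1 : Real.cos φ < Real.cos 0 :=
        Real.strictAntiOn_cos ⟨le_rfl, Real.pi_pos.le⟩ ⟨hφ.1.le, hφ.2.le⟩ hφ.1
      have h2 : Real.cos π < Real.cos φ :=
        Real.strictAntiOn_cos ⟨hφ.1.le, hφ.2.le⟩ ⟨Real.pi_pos.le, le_rfl⟩ hφ.2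
      simp only [Real.cos_zero, Real.cos_pi] at h1 h2
      exact ⟨h2, h1⟩
    · intro hy
      refine ⟨Real.arccos y, ⟨Real.arccos_pos.2 hy.2, ?_⟩, Real.cos_arccos hy.1.le hy.2.le⟩
      refine lt_of_le_of_ne (Real.arccos_le_pi y) fun h => ?_
      have := Real.arccos_eq_pi.1 h
      linarith [hy.1]
  have himg2 : (fun t : ℝ => 1 - 2*t) '' Ioo 0 1 = Ioo (-1 : ℝ) 1 := by
    ext y
    constructor
    · rintro ⟨t, ht, rfl⟩
      simp only [mem_Ioo] at ht ⊢
      constructor <;> linarith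
    · intro hy
      exact ⟨(1 - y)/2, ⟨by linarith [hy.2], by linarith [hy.1]⟩, by ring⟩
  -- first substitution
  have sub1 : ∫ u in Ioo (-1:ℝ) 1, g u = ∫ φ in Ioo (0:ℝ) π, |(-Real.sin φ)| • g (Real.cos φ) := by
    rw [← himg1]
    exact integral_image_eq_integral_abs_deriv_smul measurableSet_Ioo
      (fun x _ => (Real.hasDerivAt_cos x).hasDerivWithinAt)
      (Real.injOn_cos.mono Ioo_subset_Icc_self) g
  -- second substitution
  have sub2 : ∫ u in Ioo (-1:ℝ) 1, g u = ∫ t in Ioo (0:ℝ) 1, |(-2:ℝ)| • g (1 - 2*t) := by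
    rw [← himg2]
    refine integral_image_eq_integral_abs_deriv_smul measurableSet_Ioo
      (fun x _ => ?_) (fun t _ u _ h => by linarith) g
    have : HasDerivAt (fun t : ℝ => 1 - 2*t) (-2) x := by
      simpa using ((hasDerivAt_id x).const_mul (2:ℝ)).const_sub (1:ℝ)
    exact this.hasDerivWithinAt
  -- pointwise identity on Ioo 0 π
  have key1 : ∀ φ ∈ Ioo (0:ℝ) π,
      |(-Real.sin φ)| • g (Real.cos φ) = Real.sin φ ^ d * (1 - Real.cos φ) ^ r := by
    intro φ hφ
    have hsin : 0 < Real.sin φ := Real.sin_pos_of_pos_of_lt_pi hφ.1 hφ.2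
    have h1 : |(-Real.sin φ)| = Real.sin φ := by rw [abs_neg, abs_of_pos hsin]
    have h2 : (1 - Real.cos φ ^ 2) = Real.sin φ ^ 2 := by
      rw [Real.sin_sq]
    have h3 : (Real.sin φ ^ 2 : ℝ) ^ e = Real.sin φ ^ ((d:ℝ) - 1) := by
      rw [← Real.rpow_natCast (Real.sin φ) 2, ← Real.rpow_mul hsin.le]
      congr 1
      rw [he]
      push_cast
      ring
    have h4 : Real.sin φ ^ ((d:ℝ) - 1) = Real.sin φ ^ (d - 1 : ℕ) := by
      rw [← Real.rpow_natCast (Real.sin φ) (d-1)]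
      congr 1
      push_cast [Nat.cast_sub (by omega : 1 ≤ d)]
      ring
    have h5 : Real.sin φ * Real.sin φ ^ (d - 1 : ℕ) = Real.sin φ ^ d := by
      rw [← pow_succ']
      congr 1
      omega
    rw [h1, hg]
    dsimp only
    rw [h2, h3, h4, smul_eq_mul, ← mul_assoc, h5]
  -- pointwise identity on Ioo 0 1
  set a : ℝ := ((d:ℝ) - s - 1)/2 with ha
  set b : ℝ := ((d:ℝ) + 1)/2 with hb
  have key2 : ∀ t ∈ Ioo (0:ℝ) 1,
      |(-2:ℝ)| • g (1 - 2*t) =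
        (2:ℝ) ^ ((d:ℝ) - 1 - s/2) * (t ^ (a - 1) * (1 - t) ^ (b - 1)) := by
    intro t ht
    have ht0 : (0:ℝ) < t := ht.1
    have ht1 : (0:ℝ) < 1 - t := by linarith [ht.2]
    have e1 : (1 - (1 - 2*t)^2 : ℝ) = 4 * (t * (1 - t)) := by ring
    have e2 : (1 - (1 - 2*t) : ℝ) = 2 * t := by ring
    rw [hg]
    dsimp only
    rw [e1, e2]
    rw [Real.mul_rpow (by norm_num) (by positivity), Real.mul_rpow ht0.le ht1.le,
      Real.mul_rpow (by norm_num) ht0.le]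
    have h4 : (4:ℝ) ^ e = 2 ^ (2 * e) := by
      rw [Real.rpow_mul (by norm_num : (0:ℝ) ≤ 2)]
      norm_num
    rw [h4]
    rw [smul_eq_mul]
    have habs : |(-2:ℝ)| = (2:ℝ) := by norm_num
    rw [habs]
    have hpow2 : (2:ℝ) * (2:ℝ) ^ (2*e) * (2:ℝ) ^ r = (2:ℝ) ^ ((d:ℝ) - 1 - s/2) := by
      nth_rewrite 1 [← Real.rpow_one (2:ℝ)]
      rw [← Real.rpow_add (by norm_num : (0:ℝ) < 2), ← Real.rpow_add (by norm_num : (0:ℝ) < 2)]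
      congr 1
      rw [he, hr]; ring
    have htpow : t ^ e * t ^ r = t ^ (a - 1) := by
      rw [← Real.rpow_add ht0]
      congr 1
      rw [he, hr, ha]; ring
    have h1t : ((1:ℝ) - t) ^ e = (1 - t) ^ (b - 1) := by
      congr 1
      rw [he, hb]; ring
    calc (2:ℝ) * ((2:ℝ) ^ (2*e) * (t ^ e * (1 - t) ^ e) * ((2:ℝ) ^ r * t ^ r))
        = ((2:ℝ) * (2:ℝ) ^ (2*e) * (2:ℝ) ^ r) * ((t ^ e * t ^ r) * (1 - t) ^ e) := by ring
      _ = (2:ℝ) ^ ((d:ℝ) - 1 - s/2) * (t ^ (a - 1) * (1 - t) ^ (b - 1)) := by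
          rw [hpow2, htpow, h1t]
  have ha' : 0 < a := by rw [ha]; linarith
  have hb' : 0 < b := by rw [hb]; linarith
  have hab : a + b = (d:ℝ) - s/2 := by rw [ha, hb]; ring
  calc ∫ φ in (0:ℝ)..π, Real.sin φ ^ d * (1 - Real.cos φ) ^ r
      = ∫ φ in Ioo (0:ℝ) π, Real.sin φ ^ d * (1 - Real.cos φ) ^ r := by
        rw [intervalIntegral.integral_of_le Real.pi_pos.le, integral_Ioc_eq_integral_Ioo]
    _ = ∫ φ in Ioo (0:ℝ) π, |(-Real.sin φ)| • g (Real.cos φ) :=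
        setIntegral_congr_fun measurableSet_Ioo fun φ hφ => (key1 φ hφ).symm
    _ = ∫ u in Ioo (-1:ℝ) 1, g u := sub1.symm
    _ = ∫ t in Ioo (0:ℝ) 1, |(-2:ℝ)| • g (1 - 2*t) := sub2
    _ = ∫ t in Ioo (0:ℝ) 1,
          (2:ℝ) ^ ((d:ℝ) - 1 - s/2) * (t ^ (a - 1) * (1 - t) ^ (b - 1)) :=
        setIntegral_congr_fun measurableSet_Ioo fun t ht => key2 t ht
    _ = (2:ℝ) ^ ((d:ℝ) - 1 - s/2) * ∫ t in Ioo (0:ℝ) 1, t ^ (a - 1) * (1 - t) ^ (b - 1) :=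
        integral_const_mul _ _
    _ = (2:ℝ) ^ ((d:ℝ) - 1 - s/2) * (Real.Gamma a * Real.Gamma b / Real.Gamma ((d:ℝ) - s/2)) := by
        rw [← integral_Ioc_eq_integral_Ioo,
          ← intervalIntegral.integral_of_le (by norm_num : (0:ℝ) ≤ 1), realBeta ha' hb', hab]
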